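/- arXiv:1303.3371 — 9 statements merged into one kernel-verified Lean document; each statement's English description precedes it below -/
import Mathlib

section
/- Let X, Y be c-sets and let f : X → P_c Y be a morphism of c-sets. Then: (1) for all independent subsets U, U' of X with U ⊆ U', one has f^#(U' \ U) = f^#(U') \ f^#(U); and (2) for all independent subsets U, V, V' of X with V ⊆ U and V' ⊆ U, one has f^#(V ∩ V') = f^#(V) ∩ f^#(V'). -/
/-- A subset `U` of a c-set `(X, c)` is independent when any two of its
elements in contention are equal. -/
def Indep {X : Type*} (c : X → X → Prop) (U : Set X) : Prop :=
  ∀ u ∈ U, ∀ u' ∈ U, c u u' → u = u'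

/-- Contention on independent subsets: `U ≍ V` iff some `u ∈ U`, `v ∈ V`
are in contention. -/
def PcCont {X : Type*} (c : X → X → Prop) (U V : Set X) : Prop :=
  ∃ u ∈ U, ∃ v ∈ V, c u v

/-- The Kleisli lift `f^#` of `f : X → P_c Y`: `f^#(U) = ⋃_{u ∈ U} f u`. -/
def clift {X Y : Type*} (f : X → Set Y) (U : Set X) : Set Y :=
  ⋃ u ∈ U, f u

/-- Lemma 1 of the paper: for a morphism of c-sets
`f : X → P_c Y`, the lift `f^#` preserves differences and intersections of
independent subsets in the stated configurations. -/
theorem clift_diff_and_inter {X Y : Type*}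
    (cX : X → X → Prop) (cY : Y → Y → Prop)
    (hXrefl : ∀ x, cX x x) (hXsymm : ∀ x x', cX x x' → cX x' x)
    (hYrefl : ∀ y, cY y y) (hYsymm : ∀ y y', cY y y' → cY y' y)
    (f : X → Set Y)
    (hfval : ∀ x, Indep cY (f x))
    (hfmor : ∀ x x', PcCont cY (f x) (f x') → cX x x') :
    (∀ U U' : Set X, Indep cX U → Indep cX U' → U ⊆ U' →
      clift f (U' \ U) = clift f U' \ clift f U) ∧
    (∀ U V V' : Set X, Indep cX U → Indep cX V → Indep cX V' →
      V ⊆ U → V' ⊆ U →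
      clift f (V ∩ V') = clift f V ∩ clift f V') := by
  have key : ∀ x x' y, y ∈ f x → y ∈ f x' → cX x x' := by
    intro x x' y hy hy'
    exact hfmor x x' ⟨y, hy, y, hy', hYrefl y⟩
  constructor
  · intro U U' hU hU' hsub
    ext y
    simp only [clift, Set.mem_iUnion, Set.mem_diff, exists_prop]
    constructor
    · rintro ⟨u, ⟨huU', huU⟩, hy⟩
      refine ⟨⟨u, huU', hy⟩, ?_⟩
      rintro ⟨v, hvU, hy'⟩
      exact huU (hU' u huU' v (hsub hvU) (key u v y hy hy') ▸ hvU)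
    · rintro ⟨⟨u, huU', hy⟩, hnot⟩
      exact ⟨u, ⟨huU', fun huU => hnot ⟨u, huU, hy⟩⟩, hy⟩
  · intro U V V' hU hV hV' hVU hV'U
    ext y
    simp only [clift, Set.mem_iUnion, Set.mem_inter_iff, exists_prop]
    constructor
    · rintro ⟨u, ⟨h1, h2⟩, hy⟩
      exact ⟨⟨u, h1, hy⟩, ⟨u, h2, hy⟩⟩
    · rintro ⟨⟨v, hv, hy⟩, ⟨v', hv', hy'⟩⟩
      have : v = v' := hU v (hVU hv) v' (hV'U hv') (key v v' y hy hy')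
      exact ⟨v, ⟨hv, this ▸ hv'⟩, hy⟩
end

section
/- Let f : A → P_c X and g : B → P_c X be c-relations (morphisms of c-sets into the c-set of independent subsets). Suppose (U', V') and (U'', V'') are distinct minimal (f,g)-synchronisations, both contained (componentwise) in some (f,g)-synchronisation (U, V). Then U' ∩ U'' = ∅ and V' ∩ V'' = ∅. -/
/-- `(U, V)` is an `(f,g)`-synchronisation. -/
def IsSync {A B X : Type*} (cA : A → A → Prop) (cB : B → B → Prop)
    (f : A → Set X) (g : B → Set X) (U : Set A) (V : Set B) : Prop :=
  Indep cA U ∧ Indep cB V ∧ clift f U = clift g V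

/-- `(U, V)` is a minimal `(f,g)`-synchronisation. -/
def IsMinSync {A B X : Type*} (cA : A → A → Prop) (cB : B → B → Prop)
    (f : A → Set X) (g : B → Set X) (U : Set A) (V : Set B) : Prop :=
  IsSync cA cB f g U V ∧ ¬(U = ∅ ∧ V = ∅) ∧
    ∀ U' V', IsSync cA cB f g U' V' → U' ⊆ U → V' ⊆ V →
      (U' = ∅ ∧ V' = ∅) ∨ (U' = U ∧ V' = V)

/-- Lemma 2 of the paper: distinct minimal synchronisations
contained in a common synchronisation are componentwise disjoint. -/
theorem minimal_synchronisations_disjoint {A B X : Type*}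
    (cA : A → A → Prop) (cB : B → B → Prop) (cX : X → X → Prop)
    (hArefl : ∀ a, cA a a) (hAsymm : ∀ a a', cA a a' → cA a' a)
    (hBrefl : ∀ b, cB b b) (hBsymm : ∀ b b', cB b b' → cB b' b)
    (hXrefl : ∀ x, cX x x) (hXsymm : ∀ x x', cX x x' → cX x' x)
    (f : A → Set X)
    (hfval : ∀ a, Indep cX (f a))
    (hfmor : ∀ a a', PcCont cX (f a) (f a') → cA a a')
    (g : B → Set X)
    (hgval : ∀ b, Indep cX (g b))
    (hgmor : ∀ b b', PcCont cX (g b) (g b') → cB b b')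
    (U : Set A) (V : Set B) (hUV : IsSync cA cB f g U V)
    (U' : Set A) (V' : Set B) (U'' : Set A) (V'' : Set B)
    (h' : IsMinSync cA cB f g U' V') (h'' : IsMinSync cA cB f g U'' V'')
    (hU' : U' ⊆ U) (hV' : V' ⊆ V) (hU'' : U'' ⊆ U) (hV'' : V'' ⊆ V)
    (hne : (U', V') ≠ (U'', V'')) :
    U' ∩ U'' = ∅ ∧ V' ∩ V'' = ∅ := by
  obtain ⟨hIU, hIV, -⟩ := hUV
  obtain ⟨⟨hIU', hIV', hEq'⟩, hnt', hmin'⟩ := h'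
  obtain ⟨⟨hIU'', hIV'', hEq''⟩, hnt'', hmin''⟩ := h''
  have hfint : clift f (U' ∩ U'') = clift f U' ∩ clift f U'' := by
    apply Set.Subset.antisymm
    · rintro x hx
      simp only [clift, Set.mem_iUnion, Set.mem_inter_iff] at hx ⊢
      obtain ⟨u, ⟨h1, h2⟩, hxu⟩ := hx
      exact ⟨⟨u, h1, hxu⟩, ⟨u, h2, hxu⟩⟩
    · rintro x ⟨hx1, hx2⟩
      simp only [clift, Set.mem_iUnion, Set.mem_inter_iff] at hx1 hx2 ⊢
      obtain ⟨u1, hu1, hx1⟩ := hx1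
      obtain ⟨u2, hu2, hx2⟩ := hx2
      have heq : u1 = u2 :=
        hIU u1 (hU' hu1) u2 (hU'' hu2) (hfmor _ _ ⟨x, hx1, x, hx2, hXrefl x⟩)
      exact ⟨u1, ⟨hu1, heq ▸ hu2⟩, hx1⟩
  have hgint : clift g (V' ∩ V'') = clift g V' ∩ clift g V'' := by
    apply Set.Subset.antisymm
    · rintro x hx
      simp only [clift, Set.mem_iUnion, Set.mem_inter_iff] at hx ⊢
      obtain ⟨v, ⟨h1, h2⟩, hxv⟩ := hx
      exact ⟨⟨v, h1, hxv⟩, ⟨v, h2, hxv⟩⟩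
    · rintro x ⟨hx1, hx2⟩
      simp only [clift, Set.mem_iUnion, Set.mem_inter_iff] at hx1 hx2 ⊢
      obtain ⟨v1, hv1, hx1⟩ := hx1
      obtain ⟨v2, hv2, hx2⟩ := hx2
      have heq : v1 = v2 :=
        hIV v1 (hV' hv1) v2 (hV'' hv2) (hgmor _ _ ⟨x, hx1, x, hx2, hXrefl x⟩)
      exact ⟨v1, ⟨hv1, heq ▸ hv2⟩, hx1⟩
  have hsync : IsSync cA cB f g (U' ∩ U'') (V' ∩ V'') := by
    refine ⟨fun u hu u' hu' h => hIU' u hu.1 u' hu'.1 h,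
      fun v hv v' hv' h => hIV' v hv.1 v' hv'.1 h, ?_⟩
    rw [hfint, hgint, hEq', hEq'']
  rcases hmin' _ _ hsync Set.inter_subset_left Set.inter_subset_left with ⟨e1, e2⟩ | ⟨e1, e2⟩
  · exact ⟨e1, e2⟩
  · have hU'sub : U' ⊆ U'' := e1 ▸ Set.inter_subset_right
    have hV'sub : V' ⊆ V'' := e2 ▸ Set.inter_subset_right
    rcases hmin'' U' V' ⟨hIU', hIV', hEq'⟩ hU'sub hV'sub with ⟨e, e'⟩ | ⟨e, e'⟩
    · exact absurd ⟨e, e'⟩ hnt'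
    · exact absurd (by rw [e, e']) hne
end

section
/- Let f : A → P_c X and g : B → P_c X be c-relations. Every (f,g)-synchronisation (U, V) is the componentwise union of the minimal synchronisations it contains: if {(U_i, V_i)}_{i ∈ I} is the set of all minimal (f,g)-synchronisations contained in (U, V), then U = ⋃_{i} U_i and V = ⋃_{i} V_i. -/
lemma indep_mono {X : Type*} {c : X → X → Prop} {U V : Set X}
    (h : Indep c U) (hVU : V ⊆ U) : Indep c V :=
  fun u hu u' hu' hc => h u (hVU hu) u' (hVU hu') hc

lemma clift_diff {A X : Type*} {cA : A → A → Prop} {cX : X → X → Prop}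
    (hXrefl : ∀ x, cX x x) (f : A → Set X)
    (hfmor : ∀ a a', PcCont cX (f a) (f a') → cA a a')
    {W U' : Set A} (hW : Indep cA W) (hU' : U' ⊆ W) :
    clift f (W \ U') = clift f W \ clift f U' := by
  ext x
  simp only [clift, Set.mem_iUnion, Set.mem_diff, exists_prop]
  constructor
  · rintro ⟨u, ⟨huW, huU'⟩, hx⟩
    refine ⟨⟨u, huW, hx⟩, ?_⟩
    rintro ⟨u', hu', hx'⟩
    exact huU' (hW u huW u' (hU' hu') (hfmor _ _ ⟨x, hx, x, hx', hXrefl x⟩) ▸ hu')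
  · rintro ⟨⟨u, huW, hx⟩, hn⟩
    exact ⟨u, ⟨huW, fun h => hn ⟨u, h, hx⟩⟩, hx⟩

lemma IsSync.swap {A B X : Type*} {cA : A → A → Prop} {cB : B → B → Prop}
    {f : A → Set X} {g : B → Set X} {U : Set A} {V : Set B}
    (h : IsSync cA cB f g U V) : IsSync cB cA g f V U :=
  ⟨h.2.1, h.1, h.2.2.symm⟩

lemma IsMinSync.swap {A B X : Type*} {cA : A → A → Prop} {cB : B → B → Prop}
    {f : A → Set X} {g : B → Set X} {U : Set A} {V : Set B}
    (h : IsMinSync cA cB f g U V) : IsMinSync cB cA g f V U := by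
  refine ⟨h.1.swap, fun hc => h.2.1 ⟨hc.2, hc.1⟩, fun V' U' hs hV' hU' => ?_⟩
  rcases h.2.2 U' V' hs.swap hU' hV' with h' | h'
  · exact Or.inl ⟨h'.2, h'.1⟩
  · exact Or.inr ⟨h'.2, h'.1⟩

lemma exists_minsync {A B X : Type*} [Finite A] [Finite B]
    {cA : A → A → Prop} {cB : B → B → Prop} {cX : X → X → Prop}
    (hXrefl : ∀ x, cX x x)
    {f : A → Set X} (hfmor : ∀ a a', PcCont cX (f a) (f a') → cA a a')
    {g : B → Set X} (hgmor : ∀ b b', PcCont cX (g b) (g b') → cB b b')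
    {U : Set A} {V : Set B} (hUV : IsSync cA cB f g U V)
    {a : A} (ha : a ∈ U) :
    ∃ U' V', IsMinSync cA cB f g U' V' ∧ U' ⊆ U ∧ V' ⊆ V ∧ a ∈ U' := by
  set S : Set (Set A × Set B) :=
    {p | IsSync cA cB f g p.1 p.2 ∧ p.1 ⊆ U ∧ p.2 ⊆ V ∧ a ∈ p.1} with hS
  obtain ⟨p₀, hp₀, hmin⟩ : ∃ p₀ ∈ S, ∀ p ∈ S, p ≤ p₀ → p₀ = p := by
    obtain ⟨p, hp, hpm⟩ := Set.Finite.exists_minimal (Set.toFinite S)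
      ⟨(U, V), hUV, subset_rfl, subset_rfl, ha⟩
    exact ⟨p, hp, fun q hq hle => le_antisymm (hpm hq hle) hle⟩
  obtain ⟨hsync₀, hU₀, hV₀, ha₀⟩ := hp₀
  refine ⟨p₀.1, p₀.2, ⟨hsync₀, fun hc => absurd ha₀ (by rw [hc.1]; exact Set.notMem_empty a), ?_⟩, hU₀, hV₀, ha₀⟩
  intro U' V' hs hU' hV'
  by_cases haU' : a ∈ U'
  · right
    have := hmin (U', V') ⟨hs, hU'.trans hU₀, hV'.trans hV₀, haU'⟩ ⟨hU', hV'⟩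
    exact ⟨(congrArg Prod.fst this).symm, (congrArg Prod.snd this).symm⟩
  · left
    -- the complement is a synchronisation containing a
    have hcs : IsSync cA cB f g (p₀.1 \ U') (p₀.2 \ V') := by
      refine ⟨indep_mono hsync₀.1 Set.diff_subset, indep_mono hsync₀.2.1 Set.diff_subset, ?_⟩
      rw [clift_diff hXrefl f hfmor hsync₀.1 hU',
        clift_diff hXrefl g hgmor hsync₀.2.1 hV', hsync₀.2.2, hs.2.2]
    have := hmin (p₀.1 \ U', p₀.2 \ V')
      ⟨hcs, Set.diff_subset.trans hU₀, Set.diff_subset.trans hV₀, ⟨ha₀, haU'⟩⟩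
      ⟨Set.diff_subset, Set.diff_subset⟩
    have h1 : p₀.1 = p₀.1 \ U' := congrArg Prod.fst this
    have h2 : p₀.2 = p₀.2 \ V' := congrArg Prod.snd this
    constructor
    · rw [Set.eq_empty_iff_forall_notMem]
      intro u hu
      have hm : u ∈ p₀.1 \ U' := by rw [← h1]; exact hU' hu
      exact hm.2 hu
    · rw [Set.eq_empty_iff_forall_notMem]
      intro v hv
      have hm : v ∈ p₀.2 \ V' := by rw [← h2]; exact hV' hv
      exact hm.2 hv

/-- Lemma 3 of the paper: every synchronisation is the
componentwise union of the minimal synchronisations it contains. -/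
theorem synchronisation_decomposition {A B X : Type*}
    [Finite A] [Finite B] [Finite X]
    (cA : A → A → Prop) (cB : B → B → Prop) (cX : X → X → Prop)
    (hArefl : ∀ a, cA a a) (hAsymm : ∀ a a', cA a a' → cA a' a)
    (hBrefl : ∀ b, cB b b) (hBsymm : ∀ b b', cB b b' → cB b' b)
    (hXrefl : ∀ x, cX x x) (hXsymm : ∀ x x', cX x x' → cX x' x)
    (f : A → Set X)
    (hfval : ∀ a, Indep cX (f a))
    (hfmor : ∀ a a', PcCont cX (f a) (f a') → cA a a')
    (g : B → Set X)
    (hgval : ∀ b, Indep cX (g b))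
    (hgmor : ∀ b b', PcCont cX (g b) (g b') → cB b b')
    (U : Set A) (V : Set B) (hUV : IsSync cA cB f g U V) :
    U = {a | ∃ U' V', IsMinSync cA cB f g U' V' ∧ U' ⊆ U ∧ V' ⊆ V ∧ a ∈ U'} ∧
    V = {b | ∃ U' V', IsMinSync cA cB f g U' V' ∧ U' ⊆ U ∧ V' ⊆ V ∧ b ∈ V'} := by
  constructor
  · ext a
    constructor
    · intro ha
      exact exists_minsync hXrefl hfmor hgmor hUV ha
    · rintro ⟨U', V', _, hU', _, haU'⟩
      exact hU' haU'
  · ext b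
    constructor
    · intro hb
      obtain ⟨V', U', hmin, hV', hU', hbV'⟩ :=
        exists_minsync hXrefl hgmor hfmor hUV.swap hb
      exact ⟨U', V', hmin.swap, hU', hV', hbV'⟩
    · rintro ⟨U', V', _, _, hV', hbV'⟩
      exact hV' hbV'
end

section
/- Let f : A → P_c X and g : B → P_c X be c-relations, and let S = minsynch(f,g) be the c-set of minimal (f,g)-synchronisations, with contention (U,V) ≍ (U',V') iff U ≍_{P_c A} U' or V ≍_{P_c B} V', and with projection c-relations p : S ⇀ A, p(U,V) = U and q : S ⇀ B, q(U,V) = V. Then the resulting square is a pullback in the Kleisli category of P_c: for every c-set Z and c-relations α : Z ⇀ A, β : Z ⇀ B satisfying f^#(α z) = g^#(β z) for all z ∈ Z, there exists a unique c-relation h : Z ⇀ S (i.e., a morphism of c-sets h : Z → P_c S) such that for all z ∈ Z, p^#(h z) = α z and q^#(h z) = β z. -/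
/-- Contention on the c-set of minimal synchronisations. -/
def SynchCont {A B X : Type*} (cA : A → A → Prop) (cB : B → B → Prop)
    (f : A → Set X) (g : B → Set X)
    (σ σ' : {p : Set A × Set B // IsMinSync cA cB f g p.1 p.2}) : Prop :=
  PcCont cA σ.1.1 σ'.1.1 ∨ PcCont cB σ.1.2 σ'.1.2

namespace MSAux

variable {A B X : Type*}

lemma lift_mono {f : A → Set X} {S T : Set A} (h : S ⊆ T) : clift f S ⊆ clift f T := by
  intro x hx
  simp only [clift, Set.mem_iUnion, exists_prop] at hx ⊢
  obtain ⟨a, ha, hxa⟩ := hx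
  exact ⟨a, h ha, hxa⟩

lemma mem_lift {f : A → Set X} {S : Set A} {x : X} :
    x ∈ clift f S ↔ ∃ a ∈ S, x ∈ f a := by
  simp [clift]

lemma lift_union (f : A → Set X) (S T : Set A) :
    clift f (S ∪ T) = clift f S ∪ clift f T := by
  ext x; simp only [clift, Set.mem_iUnion, Set.mem_union, exists_prop, Set.mem_union]; aesop

lemma indep_subset {cA : A → A → Prop} {U S : Set A} (hU : Indep cA U) (h : S ⊆ U) :
    Indep cA S := fun u hu u' hu' hc => hU u (h hu) u' (h hu') hc

variable {cA : A → A → Prop} {cB : B → B → Prop} {cX : X → X → Prop}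

lemma lift_inter (hXrefl : ∀ x, cX x x)
    {f : A → Set X} (hfmor : ∀ a a', PcCont cX (f a) (f a') → cA a a')
    {U S T : Set A} (hU : Indep cA U) (hS : S ⊆ U) (hT : T ⊆ U) :
    clift f (S ∩ T) = clift f S ∩ clift f T := by
  apply Set.Subset.antisymm
  · exact Set.subset_inter (lift_mono Set.inter_subset_left) (lift_mono Set.inter_subset_right)
  · rintro x ⟨hx1, hx2⟩
    rw [mem_lift] at hx1 hx2 ⊢
    obtain ⟨s, hs, hxs⟩ := hx1
    obtain ⟨t, ht, hxt⟩ := hx2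
    have hst : s = t := hU s (hS hs) t (hT ht) (hfmor s t ⟨x, hxs, x, hxt, hXrefl x⟩)
    subst hst
    exact ⟨s, ⟨hs, ht⟩, hxs⟩

lemma lift_diff (hXrefl : ∀ x, cX x x)
    {f : A → Set X} (hfmor : ∀ a a', PcCont cX (f a) (f a') → cA a a')
    {U S S' : Set A} (hU : Indep cA U) (hS : S ⊆ U) (hS' : S' ⊆ S) :
    clift f (S \ S') = clift f S \ clift f S' := by
  ext x
  constructor
  · intro hx
    rw [mem_lift] at hx
    obtain ⟨s, hs, hxs⟩ := hx
    refine ⟨lift_mono Set.diff_subset (mem_lift.2 ⟨s, hs, hxs⟩), fun hx' => ?_⟩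
    rw [mem_lift] at hx'
    obtain ⟨s', hs', hxs'⟩ := hx'
    have : s = s' := hU s (hS hs.1) s' (hS (hS' hs')) (hfmor s s' ⟨x, hxs, x, hxs', hXrefl x⟩)
    exact hs.2 (this ▸ hs')
  · rintro ⟨hx, hx'⟩
    rw [mem_lift] at hx ⊢
    obtain ⟨s, hs, hxs⟩ := hx
    exact ⟨s, ⟨hs, fun h => hx' (mem_lift.2 ⟨s, h, hxs⟩)⟩, hxs⟩

variable {f : A → Set X} {g : B → Set X}

lemma sync_inter (hXrefl : ∀ x, cX x x)
    (hfmor : ∀ a a', PcCont cX (f a) (f a') → cA a a')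
    (hgmor : ∀ b b', PcCont cX (g b) (g b') → cB b b')
    {U : Set A} {V : Set B} (hU : Indep cA U) (hV : Indep cB V)
    {S1 S2 : Set A} {T1 T2 : Set B}
    (h1 : IsSync cA cB f g S1 T1) (h2 : IsSync cA cB f g S2 T2)
    (hS1 : S1 ⊆ U) (hS2 : S2 ⊆ U) (hT1 : T1 ⊆ V) (hT2 : T2 ⊆ V) :
    IsSync cA cB f g (S1 ∩ S2) (T1 ∩ T2) := by
  refine ⟨indep_subset hU (Set.inter_subset_left.trans hS1),
    indep_subset hV (Set.inter_subset_left.trans hT1), ?_⟩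
  rw [lift_inter hXrefl hfmor hU hS1 hS2, lift_inter hXrefl hgmor hV hT1 hT2,
    h1.2.2, h2.2.2]

lemma sync_diff (hXrefl : ∀ x, cX x x)
    (hfmor : ∀ a a', PcCont cX (f a) (f a') → cA a a')
    (hgmor : ∀ b b', PcCont cX (g b) (g b') → cB b b')
    {U : Set A} {V : Set B} (hU : Indep cA U) (hV : Indep cB V)
    {S S' : Set A} {T T' : Set B}
    (h1 : IsSync cA cB f g S T) (h2 : IsSync cA cB f g S' T')
    (hS : S ⊆ U) (hT : T ⊆ V) (hS' : S' ⊆ S) (hT' : T' ⊆ T) :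
    IsSync cA cB f g (S \ S') (T \ T') := by
  refine ⟨indep_subset hU (Set.diff_subset.trans hS),
    indep_subset hV (Set.diff_subset.trans hT), ?_⟩
  rw [lift_diff hXrefl hfmor hU hS hS', lift_diff hXrefl hgmor hV hT hT',
    h1.2.2, h2.2.2]

lemma isSync_swap {U : Set A} {V : Set B} (h : IsSync cA cB f g U V) :
    IsSync cB cA g f V U := ⟨h.2.1, h.1, h.2.2.symm⟩

lemma isMinSync_swap {U : Set A} {V : Set B} (h : IsMinSync cA cB f g U V) :
    IsMinSync cB cA g f V U := by
  obtain ⟨hs, hnt, hmin⟩ := h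
  refine ⟨isSync_swap hs, fun h' => hnt ⟨h'.2, h'.1⟩, fun V' U' hs' hV' hU' => ?_⟩
  rcases hmin U' V' (isSync_swap hs') hU' hV' with h | h
  · exact Or.inl ⟨h.2, h.1⟩
  · exact Or.inr ⟨h.2, h.1⟩

/-- Every element of a synchronisation lies in some minimal sub-synchronisation. -/
lemma exists_minsync_mem [Finite A] [Finite B] (hXrefl : ∀ x, cX x x)
    (hfmor : ∀ a a', PcCont cX (f a) (f a') → cA a a')
    (hgmor : ∀ b b', PcCont cX (g b) (g b') → cB b b')
    {U : Set A} {V : Set B} (hsync : IsSync cA cB f g U V)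
    {a : A} (ha : a ∈ U) :
    ∃ S T, IsMinSync cA cB f g S T ∧ S ⊆ U ∧ T ⊆ V ∧ a ∈ S := by
  obtain ⟨hU, hV, hUV⟩ := hsync
  set N : Set ℕ :=
    {n | ∃ S T, IsSync cA cB f g S T ∧ S ⊆ U ∧ T ⊆ V ∧ a ∈ S ∧ S.ncard + T.ncard = n} with hN
  have hne : N.Nonempty := ⟨U.ncard + V.ncard, U, V, ⟨hU, hV, hUV⟩, subset_rfl, subset_rfl, ha, rfl⟩
  obtain ⟨S, T, hST, hSU, hTV, haS, hcard⟩ := Nat.sInf_mem hne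
  refine ⟨S, T, ⟨hST, fun h => (h.1 ▸ haS : a ∈ (∅ : Set A)), ?_⟩, hSU, hTV, haS⟩
  intro S' T' hs' hS' hT'
  by_cases haS' : a ∈ S'
  · right
    have hmem : S'.ncard + T'.ncard ∈ N :=
      ⟨S', T', hs', hS'.trans hSU, hT'.trans hTV, haS', rfl⟩
    have hge : sInf N ≤ S'.ncard + T'.ncard := Nat.sInf_le hmem
    rw [← hcard] at hge
    have h1 : S'.ncard ≤ S.ncard := Set.ncard_le_ncard hS' (Set.toFinite S)
    have h2 : T'.ncard ≤ T.ncard := Set.ncard_le_ncard hT' (Set.toFinite T)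
    constructor
    · exact Set.eq_of_subset_of_ncard_le hS' (by omega) (Set.toFinite S)
    · exact Set.eq_of_subset_of_ncard_le hT' (by omega) (Set.toFinite T)
  · left
    have hdiff := sync_diff hXrefl hfmor hgmor hU hV hST hs' hSU hTV hS' hT'
    have hmem : (S \ S').ncard + (T \ T').ncard ∈ N :=
      ⟨S \ S', T \ T', hdiff, Set.diff_subset.trans hSU, Set.diff_subset.trans hTV,
        ⟨haS, haS'⟩, rfl⟩
    have hge : sInf N ≤ (S \ S').ncard + (T \ T').ncard := Nat.sInf_le hmem
    rw [← hcard] at hge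
    rw [Set.ncard_diff hS' (Set.toFinite _), Set.ncard_diff hT' (Set.toFinite _)] at hge
    have h1 : S'.ncard ≤ S.ncard := Set.ncard_le_ncard hS' (Set.toFinite S)
    have h2 : T'.ncard ≤ T.ncard := Set.ncard_le_ncard hT' (Set.toFinite T)
    constructor
    · exact (Set.ncard_eq_zero (Set.toFinite _)).1 (by omega)
    · exact (Set.ncard_eq_zero (Set.toFinite _)).1 (by omega)

/-- Two minimal sub-synchronisations of the same independent pair which
overlap in either component are equal. -/
lemma minsync_eq (hXrefl : ∀ x, cX x x)
    (hfmor : ∀ a a', PcCont cX (f a) (f a') → cA a a')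
    (hgmor : ∀ b b', PcCont cX (g b) (g b') → cB b b')
    {U : Set A} {V : Set B} (hU : Indep cA U) (hV : Indep cB V)
    {S1 S2 : Set A} {T1 T2 : Set B}
    (h1 : IsMinSync cA cB f g S1 T1) (h2 : IsMinSync cA cB f g S2 T2)
    (hS1 : S1 ⊆ U) (hS2 : S2 ⊆ U) (hT1 : T1 ⊆ V) (hT2 : T2 ⊆ V)
    (hover : (S1 ∩ S2).Nonempty ∨ (T1 ∩ T2).Nonempty) :
    S1 = S2 ∧ T1 = T2 := by
  have hint := sync_inter hXrefl hfmor hgmor hU hV h1.1 h2.1 hS1 hS2 hT1 hT2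
  have hnt : ¬(S1 ∩ S2 = ∅ ∧ T1 ∩ T2 = ∅) := by
    rcases hover with h | h
    · exact fun hh => (hh.1 ▸ h : (∅ : Set A).Nonempty).ne_empty rfl
    · exact fun hh => (hh.2 ▸ h : (∅ : Set B).Nonempty).ne_empty rfl
  have e1 := h1.2.2 _ _ hint Set.inter_subset_left Set.inter_subset_left
  have e2 := h2.2.2 _ _ hint Set.inter_subset_right Set.inter_subset_right
  rcases e1 with h | e1
  · exact absurd h hnt
  rcases e2 with h | e2
  · exact absurd h hnt
  exact ⟨e1.1.symm.trans e2.1, e1.2.symm.trans e2.2⟩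

end MSAux

/-- Lemma 4 of the paper: the square of minimal
synchronisations is a pullback in the Kleisli category of `P_c`:
for all c-relations `α : Z ⇀ A`, `β : Z ⇀ B` with `f^# ∘ α = g^# ∘ β`,
there is a unique c-relation `h : Z ⇀ minsynch(f,g)` with
`p^# ∘ h = α` and `q^# ∘ h = β`. -/
theorem minsynch_is_pullback {A B X Z : Type*}
    [Finite A] [Finite B] [Finite X] [Finite Z]
    (cA : A → A → Prop) (cB : B → B → Prop)
    (cX : X → X → Prop) (cZ : Z → Z → Prop)
    (hArefl : ∀ a, cA a a) (hAsymm : ∀ a a', cA a a' → cA a' a)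
    (hBrefl : ∀ b, cB b b) (hBsymm : ∀ b b', cB b b' → cB b' b)
    (hXrefl : ∀ x, cX x x) (hXsymm : ∀ x x', cX x x' → cX x' x)
    (hZrefl : ∀ z, cZ z z) (hZsymm : ∀ z z', cZ z z' → cZ z' z)
    (f : A → Set X)
    (hfval : ∀ a, Indep cX (f a))
    (hfmor : ∀ a a', PcCont cX (f a) (f a') → cA a a')
    (g : B → Set X)
    (hgval : ∀ b, Indep cX (g b))
    (hgmor : ∀ b b', PcCont cX (g b) (g b') → cB b b')
    (α : Z → Set A)
    (hαval : ∀ z, Indep cA (α z))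
    (hαmor : ∀ z z', PcCont cA (α z) (α z') → cZ z z')
    (β : Z → Set B)
    (hβval : ∀ z, Indep cB (β z))
    (hβmor : ∀ z z', PcCont cB (β z) (β z') → cZ z z')
    (hcomm : ∀ z, clift f (α z) = clift g (β z)) :
    ∃! h : Z → Set {p : Set A × Set B // IsMinSync cA cB f g p.1 p.2},
      (∀ z, Indep (SynchCont cA cB f g) (h z)) ∧
      (∀ z z', PcCont (SynchCont cA cB f g) (h z) (h z') → cZ z z') ∧
      (∀ z, clift (fun σ => σ.1.1) (h z) = α z) ∧
      (∀ z, clift (fun σ => σ.1.2) (h z) = β z) := by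
  classical
  refine ⟨fun z => {σ | σ.1.1 ⊆ α z ∧ σ.1.2 ⊆ β z}, ⟨?_, ?_, ?_, ?_⟩, ?_⟩
  · -- independence
    intro z σ hσ τ hτ hc
    have key : σ.1.1 = τ.1.1 ∧ σ.1.2 = τ.1.2 := by
      apply MSAux.minsync_eq hXrefl hfmor hgmor (hαval z) (hβval z) σ.2 τ.2
        hσ.1 hτ.1 hσ.2 hτ.2
      rcases hc with ⟨a, haσ, a', haτ, hca⟩ | ⟨b, hbσ, b', hbτ, hcb⟩
      · have he : a = a' := hαval z a (hσ.1 haσ) a' (hτ.1 haτ) hca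
        exact Or.inl ⟨a, haσ, he ▸ haτ⟩
      · have he : b = b' := hβval z b (hσ.2 hbσ) b' (hτ.2 hbτ) hcb
        exact Or.inr ⟨b, hbσ, he ▸ hbτ⟩
    exact Subtype.ext (Prod.ext key.1 key.2)
  · -- morphism
    rintro z z' ⟨σ, hσ, τ, hτ, hc⟩
    rcases hc with ⟨a, haσ, a', haτ, hca⟩ | ⟨b, hbσ, b', hbτ, hcb⟩
    · exact hαmor z z' ⟨a, hσ.1 haσ, a', hτ.1 haτ, hca⟩
    · exact hβmor z z' ⟨b, hσ.2 hbσ, b', hτ.2 hbτ, hcb⟩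
  · -- first projection
    intro z
    apply Set.Subset.antisymm
    · intro a ha
      obtain ⟨σ, hσ, haσ⟩ := MSAux.mem_lift.1 ha
      exact hσ.1 haσ
    · intro a ha
      obtain ⟨S, T, hmin, hSU, hTV, haS⟩ :=
        MSAux.exists_minsync_mem hXrefl hfmor hgmor ⟨hαval z, hβval z, hcomm z⟩ ha
      exact MSAux.mem_lift.2 ⟨⟨(S, T), hmin⟩, ⟨hSU, hTV⟩, haS⟩
  · -- second projection
    intro z
    apply Set.Subset.antisymm
    · intro b hb
      obtain ⟨σ, hσ, hbσ⟩ := MSAux.mem_lift.1 hb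
      exact hσ.2 hbσ
    · intro b hb
      obtain ⟨T, S, hmin, hTV, hSU, hbT⟩ :=
        MSAux.exists_minsync_mem hXrefl hgmor hfmor ⟨hβval z, hαval z, (hcomm z).symm⟩ hb
      exact MSAux.mem_lift.2 ⟨⟨(S, T), MSAux.isMinSync_swap hmin⟩, ⟨hSU, hTV⟩, hbT⟩
  · -- uniqueness
    rintro h' ⟨hind', hmor', hfst', hsnd'⟩
    funext z
    ext σ
    simp only [Set.mem_setOf_eq]
    have hsub : ∀ τ : {p : Set A × Set B // IsMinSync cA cB f g p.1 p.2},
        τ ∈ h' z → τ.1.1 ⊆ α z ∧ τ.1.2 ⊆ β z := by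
      intro τ hτ
      constructor
      · intro a ha
        rw [← hfst' z]
        exact MSAux.mem_lift.2 ⟨τ, hτ, ha⟩
      · intro b hb
        rw [← hsnd' z]
        exact MSAux.mem_lift.2 ⟨τ, hτ, hb⟩
    constructor
    · exact hsub σ
    · rintro ⟨hσ1, hσ2⟩
      rcases Set.eq_empty_or_nonempty σ.1.1 with he | ⟨a, ha⟩
      · rcases Set.eq_empty_or_nonempty σ.1.2 with he2 | ⟨b, hb⟩
        · exact absurd ⟨he, he2⟩ σ.2.2.1
        · have hb' : b ∈ clift (fun σ => σ.1.2) (h' z) := (hsnd' z).symm ▸ hσ2 hb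
          obtain ⟨τ, hτ, hbτ⟩ := MSAux.mem_lift.1 hb'
          have hτsub := hsub τ hτ
          have hkey := MSAux.minsync_eq hXrefl hfmor hgmor (hαval z) (hβval z) σ.2 τ.2
            hσ1 hτsub.1 hσ2 hτsub.2 (Or.inr ⟨b, hb, hbτ⟩)
          have : σ = τ := Subtype.ext (Prod.ext hkey.1 hkey.2)
          exact this ▸ hτ
      · have ha' : a ∈ clift (fun σ => σ.1.1) (h' z) := (hfst' z).symm ▸ hσ1 ha
        obtain ⟨τ, hτ, haτ⟩ := MSAux.mem_lift.1 ha'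
        have hτsub := hsub τ hτ
        have hkey := MSAux.minsync_eq hXrefl hfmor hgmor (hαval z) (hβval z) σ.2 τ.2
          hσ1 hτsub.1 hσ2 hτsub.2 (Or.inl ⟨a, ha, haτ⟩)
        have : σ = τ := Subtype.ext (Prod.ext hkey.1 hkey.2)
        exact this ▸ hτ
end

section
/- Let l, x0, x1 be finite sets and g0 : l → x0, f1 : l → x1 functions, and let (M, r : x0 → M, s : x1 → M) be a pushout of g0 and f1 in the category of sets (e.g., the quotient of the disjoint union x0 ⊔ x1 by the equivalence relation generated by inl(g0 a) ∼ inr(f1 a) for a ∈ l). Call a pair (U, V) with U ⊆ x0, V ⊆ x1 a synchronisation if g0⁻¹(U) = f1⁻¹(V); it is trivial if U = V = ∅, and minimal if nontrivial and every synchronisation contained in it componentwise is trivial or equal to it. Then the map M → 𝒫(x0) × 𝒫(x1) sending m to (r⁻¹({m}), s⁻¹({m})) is a bijection from M onto the set of minimal synchronisations. -/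
/-- `(U, V)` is a synchronisation for `g : l → x0`, `f : l → x1`:
the preimages agree. -/
def FSync {l x0 x1 : Type} (g : l → x0) (f : l → x1)
    (U : Set x0) (V : Set x1) : Prop :=
  g ⁻¹' U = f ⁻¹' V

/-- Minimal synchronisation: nontrivial, and every synchronisation
contained componentwise in it is trivial or equal to it. -/
def FMinSync {l x0 x1 : Type} (g : l → x0) (f : l → x1)
    (U : Set x0) (V : Set x1) : Prop :=
  FSync g f U V ∧ ¬(U = ∅ ∧ V = ∅) ∧
    ∀ U' V', FSync g f U' V' → U' ⊆ U → V' ⊆ V →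
      (U' = ∅ ∧ V' = ∅) ∨ (U' = U ∧ V' = V)

/-- for a pushout `(M, r, s)` of `g0 : l → x0` and
`f1 : l → x1` in `Set`, the map `m ↦ (r⁻¹{m}, s⁻¹{m})` is a bijection
from `M` onto the set of minimal synchronisations. -/
theorem pushout_elements_are_minimal_synchronisations
    {l x0 x1 M : Type} [Finite l] [Finite x0] [Finite x1]
    (g0 : l → x0) (f1 : l → x1) (r : x0 → M) (s : x1 → M)
    (hcomm : r ∘ g0 = s ∘ f1)
    (huniv : ∀ (W : Type) (u : x0 → W) (v : x1 → W), u ∘ g0 = v ∘ f1 →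
      ∃! w : M → W, w ∘ r = u ∧ w ∘ s = v) :
    Set.BijOn (fun m => (r ⁻¹' {m}, s ⁻¹' {m})) Set.univ
      {p : Set x0 × Set x1 | FMinSync g0 f1 p.1 p.2} := by
  have hc : ∀ a, r (g0 a) = s (f1 a) := fun a => congrFun hcomm a
  -- joint surjectivity of r and s
  have hsurj : ∀ m : M, (∃ x, r x = m) ∨ (∃ y, s y = m) := by
    intro m
    obtain ⟨w, -, huniq⟩ := huniv Prop (fun _ => True) (fun _ => True) rfl
    have h1 : (fun _ : M => True) = w := huniq _ ⟨rfl, rfl⟩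
    have h2 : (fun m : M => (∃ x, r x = m) ∨ (∃ y, s y = m)) = w := by
      apply huniq
      constructor
      · funext x; simp only [Function.comp]
        exact eq_true (Or.inl ⟨x, rfl⟩)
      · funext y; simp only [Function.comp]
        exact eq_true (Or.inr ⟨y, rfl⟩)
    have := congrFun (h2.trans h1.symm) m
    simp only [eq_iff_iff, iff_true] at this
    exact this
  -- each fiber pair is a synchronisation
  have hsync : ∀ m : M, FSync g0 f1 (r ⁻¹' {m}) (s ⁻¹' {m}) := by
    intro m
    ext a
    simp only [Set.mem_preimage, Set.mem_singleton_iff, hc a]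
  constructor
  · -- maps into minimal synchronisations
    intro m _
    refine ⟨hsync m, ?_, ?_⟩
    · rintro ⟨hU, hV⟩
      rcases hsurj m with ⟨x, hx⟩ | ⟨y, hy⟩
      · exact absurd (hU ▸ hx : x ∈ (∅ : Set x0)) (by simp)
      · exact absurd (hV ▸ hy : y ∈ (∅ : Set x1)) (by simp)
    · intro U' V' hs hU' hV'
      by_cases hne : U' = ∅ ∧ V' = ∅
      · exact Or.inl hne
      right
      obtain ⟨w, ⟨hwr, hws⟩, -⟩ := huniv Prop (fun x => x ∈ U') (fun y => y ∈ V') (by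
        funext a
        simp only [Function.comp]
        exact propext (Set.ext_iff.mp hs a))
      have hwrm : ∀ x, (x ∈ U') = w (r x) := fun x => (congrFun hwr x).symm
      have hwsm : ∀ y, (y ∈ V') = w (s y) := fun y => (congrFun hws y).symm
      have hwm : w m := by
        rcases not_and_or.mp hne with h | h
        · obtain ⟨x, hx⟩ := Set.nonempty_iff_ne_empty.mpr h
          have := hU' hx
          simp only [Set.mem_preimage, Set.mem_singleton_iff] at this
          rw [← this]; rw [← hwrm]; exact hx
        · obtain ⟨y, hy⟩ := Set.nonempty_iff_ne_empty.mpr h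
          have := hV' hy
          simp only [Set.mem_preimage, Set.mem_singleton_iff] at this
          rw [← this]; rw [← hwsm]; exact hy
      constructor
      · apply Set.Subset.antisymm hU'
        intro x hx
        simp only [Set.mem_preimage, Set.mem_singleton_iff] at hx
        have := hwrm x
        rw [hx] at this
        exact this ▸ hwm
      · apply Set.Subset.antisymm hV'
        intro y hy
        simp only [Set.mem_preimage, Set.mem_singleton_iff] at hy
        have := hwsm y
        rw [hy] at this
        exact this ▸ hwm
  constructor
  · -- injective
    intro m _ m' _ h
    simp only [Prod.mk.injEq] at h
    rcases hsurj m with ⟨x, hx⟩ | ⟨y, hy⟩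
    · have : x ∈ r ⁻¹' {m'} := h.1 ▸ (by simp [hx])
      simpa [← hx] using this
    · have : y ∈ s ⁻¹' {m'} := h.2 ▸ (by simp [hy])
      simpa [← hy] using this
  · -- surjective onto minimal syncs
    rintro ⟨U, V⟩ ⟨hs, hnt, hmin⟩
    obtain ⟨w, ⟨hwr, hws⟩, -⟩ := huniv Prop (fun x => x ∈ U) (fun y => y ∈ V) (by
      funext a
      simp only [Function.comp]
      exact propext (Set.ext_iff.mp hs a))
    have hwrm : ∀ x, (x ∈ U) = w (r x) := fun x => (congrFun hwr x).symm
    have hwsm : ∀ y, (y ∈ V) = w (s y) := fun y => (congrFun hws y).symm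
    -- pick an m with nonempty fiber pair
    obtain ⟨m, hwm, hfib⟩ :
        ∃ m, w m ∧ ((r ⁻¹' {m} : Set x0).Nonempty ∨ (s ⁻¹' {m} : Set x1).Nonempty) := by
      rcases not_and_or.mp hnt with h | h
      · obtain ⟨x, hx⟩ := Set.nonempty_iff_ne_empty.mpr h
        exact ⟨r x, (hwrm x) ▸ hx, Or.inl ⟨x, rfl⟩⟩
      · obtain ⟨y, hy⟩ := Set.nonempty_iff_ne_empty.mpr h
        exact ⟨s y, (hwsm y) ▸ hy, Or.inr ⟨y, rfl⟩⟩
    have hUsub : r ⁻¹' {m} ⊆ U := by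
      intro x hx
      simp only [Set.mem_preimage, Set.mem_singleton_iff] at hx
      rw [hwrm x, hx]; exact hwm
    have hVsub : s ⁻¹' {m} ⊆ V := by
      intro y hy
      simp only [Set.mem_preimage, Set.mem_singleton_iff] at hy
      rw [hwsm y, hy]; exact hwm
    rcases hmin _ _ (hsync m) hUsub hVsub with ⟨h1, h2⟩ | ⟨h1, h2⟩
    · rcases hfib with ⟨x, hx⟩ | ⟨y, hy⟩
      · exact absurd (h1 ▸ hx) (by simp)
      · exact absurd (h2 ▸ hy) (by simp)
    · exact ⟨m, Set.mem_univ m, by simp [h1, h2]⟩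
end

section
/- Let A, B, X be finite types and f : A → Multiset X, g : B → Multiset X functions. Then the set of minimal (f,g)-synchronisations is finite. -/
/-- `(U, V)` is a multi `(f,g)`-synchronisation: `f^#(U) = g^#(V)`. -/
def MSync {A B X : Type*} (f : A → Multiset X) (g : B → Multiset X)
    (p : Multiset A × Multiset B) : Prop :=
  p.1.bind f = p.2.bind g

/-- A minimal multi synchronisation: nonzero, and every synchronisation
below it in the componentwise order is trivial or equal to it. -/
def MinMSync {A B X : Type*} (f : A → Multiset X) (g : B → Multiset X)
    (p : Multiset A × Multiset B) : Prop :=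
  MSync f g p ∧ p ≠ 0 ∧
    ∀ q, MSync f g q → q ≤ p → q = 0 ∨ q = p

lemma multiset_isPWO {A : Type*} [Finite A] (S : Set (Multiset A)) : S.IsPWO := by
  classical
  have hsurj : Function.Surjective (Finsupp.toMultiset : (A →₀ ℕ) → Multiset A) :=
    (Finsupp.orderIsoMultiset (ι := A)).surjective
  have : S = Finsupp.toMultiset '' (Finsupp.toMultiset ⁻¹' S) := by
    rw [Set.image_preimage_eq _ hsurj]
  rw [this]
  exact Set.PartiallyWellOrderedOn.image_of_monotone_on
    (Set.isPWO_of_wellQuasiOrderedLE _) fun a _ b _ hab =>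
      (Finsupp.orderIsoMultiset (ι := A)).monotone hab

/-- the set of minimal `(f,g)`-synchronisations is finite. -/
theorem minimal_multisynchronisations_finite
    {A B X : Type*} [Finite A] [Finite B] [Finite X]
    (f : A → Multiset X) (g : B → Multiset X) :
    {p : Multiset A × Multiset B | MinMSync f g p}.Finite := by
  have hpwo : (Set.univ : Set (Multiset A × Multiset B)).IsPWO := by
    have := (multiset_isPWO (Set.univ : Set (Multiset A))).prod
      (multiset_isPWO (Set.univ : Set (Multiset B)))
    simpa [Set.univ_prod_univ] using this
  have hanti : IsAntichain (· ≤ ·)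
      {p : Multiset A × Multiset B | MinMSync f g p} := by
    intro p hp q hq hne hle
    rcases hq.2.2 p hp.1 hle with h0 | heq
    · exact hp.2.1 h0
    · exact hne heq
  exact hanti.finite_of_partiallyWellOrderedOn
    (hpwo.mono (Set.subset_univ _))
end

section
/- Let A, B, X be finite types and f : A → Multiset X, g : B → Multiset X. Every (f,g)-synchronisation (U, V) admits a minimal decomposition: there exists a finite family {(k_i, (U_i, V_i))}_{i ∈ I} with each k_i ∈ ℕ, each (U_i, V_i) a minimal (f,g)-synchronisation, the (U_i, V_i) pairwise distinct, and (U, V) = (Σ_i k_i • U_i, Σ_i k_i • V_i). -/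
private lemma sum_insert_incr {α M : Type*} [DecidableEq α] [AddCommMonoid M]
    (s : Finset α) (k : α → ℕ) (p : α) (F : α → M) :
    ∑ q ∈ insert p s, ((if q = p then 1 else 0) + (if q ∈ s then k q else 0)) • F q
      = F p + ∑ q ∈ s, k q • F q := by
  have h1 : ∑ q ∈ insert p s, (if q = p then 1 else 0) • F q = F p := by
    simp [ite_smul, Finset.sum_ite_eq' (insert p s) p F]
  have h2 : ∑ q ∈ insert p s, (if q ∈ s then k q else 0) • F q
      = ∑ q ∈ s, k q • F q := by
    simp only [ite_smul, zero_smul]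
    rw [Finset.sum_ite_mem]
    congr 1
    exact Finset.inter_eq_right.mpr (Finset.subset_insert p s)
  calc ∑ q ∈ insert p s, ((if q = p then 1 else 0) + (if q ∈ s then k q else 0)) • F q
      = ∑ q ∈ insert p s, ((if q = p then 1 else 0) • F q + (if q ∈ s then k q else 0) • F q) := by
        simp [add_smul]
    _ = F p + ∑ q ∈ s, k q • F q := by rw [Finset.sum_add_distrib, h1, h2]

private lemma exists_min_msync {A B X : Type*} (f : A → Multiset X) (g : B → Multiset X)
    (p0 : Multiset A × Multiset B) (h0 : MSync f g p0) (hne : p0 ≠ 0) :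
    ∃ p, MinMSync f g p ∧ p ≤ p0 := by
  classical
  have hex : ∃ n, ∃ q : Multiset A × Multiset B,
      MSync f g q ∧ q ≠ 0 ∧ q ≤ p0 ∧ Multiset.card q.1 + Multiset.card q.2 = n :=
    ⟨_, p0, h0, hne, le_rfl, rfl⟩
  obtain ⟨q, hq, hqne, hqle, hqcard⟩ := Nat.find_spec hex
  refine ⟨q, ⟨hq, hqne, ?_⟩, hqle⟩
  intro r hr hrle
  by_cases hr0 : r = 0
  · exact Or.inl hr0
  right
  have hfind : Nat.find hex ≤ Multiset.card r.1 + Multiset.card r.2 :=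
    Nat.find_min' hex ⟨r, hr, hr0, hrle.trans hqle, rfl⟩
  have h1 : Multiset.card r.1 ≤ Multiset.card q.1 := Multiset.card_le_card hrle.1
  have h2 : Multiset.card r.2 ≤ Multiset.card q.2 := Multiset.card_le_card hrle.2
  have e1 : Multiset.card q.1 ≤ Multiset.card r.1 := by omega
  have e2 : Multiset.card q.2 ≤ Multiset.card r.2 := by omega
  exact Prod.ext (Multiset.eq_of_le_of_card_le hrle.1 e1)
    (Multiset.eq_of_le_of_card_le hrle.2 e2)

/-- Lemma 7 of the paper: every synchronisation admits a
minimal decomposition, i.e. it is a linear combination, with natural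
number coefficients, of pairwise distinct minimal synchronisations. -/
theorem msync_minimal_decomposition
    {A B X : Type*} [Finite A] [Finite B] [Finite X]
    (f : A → Multiset X) (g : B → Multiset X)
    (U : Multiset A) (V : Multiset B) (h : MSync f g (U, V)) :
    ∃ (s : Finset (Multiset A × Multiset B))
      (k : Multiset A × Multiset B → ℕ),
      (∀ p ∈ s, MinMSync f g p) ∧
      U = ∑ p ∈ s, k p • p.1 ∧
      V = ∑ p ∈ s, k p • p.2 := by
  classical
  suffices H : ∀ n (U : Multiset A) (V : Multiset B),
      Multiset.card U + Multiset.card V ≤ n → MSync f g (U, V) →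
      ∃ (s : Finset (Multiset A × Multiset B)) (k : Multiset A × Multiset B → ℕ),
        (∀ p ∈ s, MinMSync f g p) ∧
        U = ∑ p ∈ s, k p • p.1 ∧ V = ∑ p ∈ s, k p • p.2 by
    exact H _ U V le_rfl h
  intro n
  induction n with
  | zero =>
    intro U V hc _
    have hU : U = 0 := by
      have := Multiset.card_eq_zero.mp (by omega : Multiset.card U = 0); exact this
    have hV : V = 0 := by
      have := Multiset.card_eq_zero.mp (by omega : Multiset.card V = 0); exact this
    exact ⟨∅, fun _ => 0, by simp, by simp [hU], by simp [hV]⟩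
  | succ n ih =>
    intro U V hc h
    by_cases h0 : (U, V) = (0 : Multiset A × Multiset B)
    · have hU : U = 0 := congrArg Prod.fst h0
      have hV : V = 0 := congrArg Prod.snd h0
      exact ⟨∅, fun _ => 0, by simp, by simp [hU], by simp [hV]⟩
    · obtain ⟨p, hpmin, hple⟩ := exists_min_msync f g (U, V) h h0
      obtain ⟨U', hU⟩ := Multiset.le_iff_exists_add.mp hple.1
      obtain ⟨V', hV⟩ := Multiset.le_iff_exists_add.mp hple.2
      have hU2 : U = p.1 + U' := hU
      have hV2 : V = p.2 + V' := hV
      have hsync' : MSync f g (U', V') := by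
        have hpb : p.1.bind f = p.2.bind g := hpmin.1
        have hb : U.bind f = V.bind g := h
        rw [hU2, hV2, Multiset.add_bind, Multiset.add_bind, hpb] at hb
        exact add_left_cancel hb
      have hpne : Multiset.card p.1 + Multiset.card p.2 ≠ 0 := by
        intro hz
        apply hpmin.2.1
        have h1 : p.1 = 0 := Multiset.card_eq_zero.mp (by omega)
        have h2 : p.2 = 0 := Multiset.card_eq_zero.mp (by omega)
        exact Prod.ext h1 h2
      have hc' : Multiset.card U' + Multiset.card V' ≤ n := by
        rw [hU2, hV2] at hc
        simp only [Multiset.card_add] at hc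
        omega
      obtain ⟨s, k, hmin, hU', hV'⟩ := ih U' V' hc' hsync'
      refine ⟨insert p s,
        fun q => (if q = p then 1 else 0) + (if q ∈ s then k q else 0), ?_, ?_, ?_⟩
      · intro q hq
        rcases Finset.mem_insert.mp hq with rfl | hq
        · exact hpmin
        · exact hmin q hq
      · rw [sum_insert_incr s k p (fun q => q.1), hU2, hU']
      · rw [sum_insert_incr s k p (fun q => q.2), hV2, hV']
end

section
/- Let A, B, X be finite types and f : A → Multiset X, g : B → Multiset X. Let S be the (finite) set of minimal (f,g)-synchronisations, and define p : S → Multiset A, p(U,V) = U and q : S → Multiset B, q(U,V) = V. Then the square formed by p, q, f, g is a weak pullback in the Kleisli category of the multiset monad: for every type Y and functions α : Y → Multiset A, β : Y → Multiset B such that (α y).bind f = (β y).bind g for all y ∈ Y, there exists a function h : Y → Multiset S such that for all y ∈ Y, (h y).bind p = α y and (h y).bind q = β y. -/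
/-- Every nonzero synchronisation has a minimal synchronisation below it. -/
lemma exists_min_below {A B X : Type*} (f : A → Multiset X) (g : B → Multiset X)
    (p : Multiset A × Multiset B) (hp : MSync f g p) (hne : p ≠ 0) :
    ∃ q, MinMSync f g q ∧ q ≤ p := by
  classical
  set S : Set ℕ := {n | ∃ q : Multiset A × Multiset B,
    MSync f g q ∧ q ≤ p ∧ q ≠ 0 ∧ Multiset.card q.1 + Multiset.card q.2 = n} with hS
  have hSne : S.Nonempty := ⟨_, p, hp, le_refl _, hne, rfl⟩
  obtain ⟨n, hnS, hmin⟩ := Nat.lt_wfRel.wf.has_min S hSne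
  obtain ⟨q, hq, hqp, hq0, hqn⟩ := hnS
  refine ⟨q, ⟨hq, hq0, ?_⟩, hqp⟩
  intro r hr hrq
  by_cases hr0 : r = 0
  · exact Or.inl hr0
  · right
    have hrmem : Multiset.card r.1 + Multiset.card r.2 ∈ S :=
      ⟨r, hr, le_trans hrq hqp, hr0, rfl⟩
    have hle : n ≤ Multiset.card r.1 + Multiset.card r.2 := by
      by_contra hlt
      exact hmin _ hrmem (Nat.lt_of_not_le hlt)
    have h1 : r.1 ≤ q.1 := hrq.1
    have h2 : r.2 ≤ q.2 := hrq.2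
    have hc1 : Multiset.card r.1 ≤ Multiset.card q.1 := Multiset.card_le_card h1
    have hc2 : Multiset.card r.2 ≤ Multiset.card q.2 := Multiset.card_le_card h2
    have he1 : Multiset.card q.1 ≤ Multiset.card r.1 := by omega
    have he2 : Multiset.card q.2 ≤ Multiset.card r.2 := by omega
    have := Multiset.eq_of_le_of_card_le h1 he1
    have := Multiset.eq_of_le_of_card_le h2 he2
    exact Prod.ext ‹r.1 = q.1› ‹r.2 = q.2›

/-- Every synchronisation decomposes as a sum of minimal ones. -/
lemma decomp {A B X : Type*} (f : A → Multiset X) (g : B → Multiset X) :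
    ∀ n (U : Multiset A) (V : Multiset B),
      Multiset.card U + Multiset.card V = n → MSync f g (U, V) →
      ∃ W : Multiset {p : Multiset A × Multiset B // MinMSync f g p},
        W.bind (fun σ => σ.1.1) = U ∧ W.bind (fun σ => σ.1.2) = V := by
  classical
  intro n
  induction n using Nat.strong_induction_on with
  | _ n ih =>
    intro U V hn hsync
    by_cases h0 : (U, V) = (0 : Multiset A × Multiset B)
    · refine ⟨0, ?_, ?_⟩ <;> simp [Prod.ext_iff] at h0 ⊢ <;> tauto
    · obtain ⟨q, hqmin, hqle⟩ := exists_min_below f g (U, V) hsync h0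
      have h1 : q.1 ≤ U := hqle.1
      have h2 : q.2 ≤ V := hqle.2
      have hU : q.1 + (U - q.1) = U := add_tsub_cancel_of_le h1
      have hV : q.2 + (V - q.2) = V := add_tsub_cancel_of_le h2
      have hsync' : MSync f g (U - q.1, V - q.2) := by
        have hb : (q.1 + (U - q.1)).bind f = (q.2 + (V - q.2)).bind g := by
          rw [hU, hV]; exact hsync
        rw [Multiset.add_bind, Multiset.add_bind, hqmin.1] at hb
        exact add_left_cancel hb
      have hqpos : 0 < Multiset.card q.1 + Multiset.card q.2 := by
        rcases Nat.eq_zero_or_pos (Multiset.card q.1 + Multiset.card q.2) with h | h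
        · exfalso
          apply hqmin.2.1
          have : Multiset.card q.1 = 0 ∧ Multiset.card q.2 = 0 := by omega
          exact Prod.ext (Multiset.card_eq_zero.mp this.1) (Multiset.card_eq_zero.mp this.2)
        · exact h
      have hcard : Multiset.card (U - q.1) + Multiset.card (V - q.2) < n := by
        have c1 : Multiset.card (U - q.1) = Multiset.card U - Multiset.card q.1 :=
          Multiset.card_sub h1
        have c2 : Multiset.card (V - q.2) = Multiset.card V - Multiset.card q.2 :=
          Multiset.card_sub h2
        have d1 : Multiset.card q.1 ≤ Multiset.card U := Multiset.card_le_card h1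
        have d2 : Multiset.card q.2 ≤ Multiset.card V := Multiset.card_le_card h2
        omega
      obtain ⟨W, hW1, hW2⟩ := ih _ hcard (U - q.1) (V - q.2) rfl hsync'
      refine ⟨W + {⟨q, hqmin⟩}, ?_, ?_⟩
      · rw [Multiset.add_bind, hW1]
        simp [Multiset.bind_singleton]
        rw [add_comm]; exact hU
      · rw [Multiset.add_bind, hW2]
        simp [Multiset.bind_singleton]
        rw [add_comm]; exact hV

/-- the square of minimal synchronisations, with the
projections `p (U,V) = U`, `q (U,V) = V`, is a weak pullback in the
Kleisli category of the multiset monad. -/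
theorem minmsynch_is_weak_pullback
    {A B X : Type*} [Finite A] [Finite B] [Finite X]
    (f : A → Multiset X) (g : B → Multiset X)
    (Y : Type*) (α : Y → Multiset A) (β : Y → Multiset B)
    (hcomm : ∀ y, (α y).bind f = (β y).bind g) :
    ∃ h : Y → Multiset {p : Multiset A × Multiset B // MinMSync f g p},
      ∀ y, (h y).bind (fun σ => σ.1.1) = α y ∧
           (h y).bind (fun σ => σ.1.2) = β y := by
  choose W hW1 hW2 using fun y =>
    decomp f g _ (α y) (β y) rfl (hcomm y)
  exact ⟨W, fun y => ⟨hW1 y, hW2 y⟩⟩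
end

section
/- Let t : Fin 2 → Multiset (Fin 1) be the function with t 0 = t 1 = {0}. Then the pair ({0,1}, {0,1}) ∈ Multiset (Fin 2) × Multiset (Fin 2) is a (t,t)-synchronisation, each pair ({i}, {j}) for i, j ∈ Fin 2 is a minimal (t,t)-synchronisation, and ({0,1}, {0,1}) has two distinct decompositions as sums of minimal synchronisations: ({0},{0}) + ({1},{1}) and ({0},{1}) + ({1},{0}). In particular, minimal decompositions of synchronisations are not unique, so the square of minimal synchronisations is a weak pullback but not a pullback in the Kleisli category of the multiset monad. -/
/-- for `t : 2 → 1` with `t 0 = t 1 = {0}`, the pair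
`({0,1}, {0,1})` is a `(t,t)`-synchronisation, every `({i},{j})` is a
minimal `(t,t)`-synchronisation, and `({0,1},{0,1})` has two distinct
decompositions into minimal synchronisations, namely
`({0},{0}) + ({1},{1})` and `({0},{1}) + ({1},{0})`.  Hence minimal
decompositions are not unique. -/
theorem minimal_decomposition_not_unique
    (t : Fin 2 → Multiset (Fin 1))
    (ht0 : t 0 = {0}) (ht1 : t 1 = {0}) :
    MSync t t (({0, 1} : Multiset (Fin 2)), ({0, 1} : Multiset (Fin 2))) ∧
    (∀ i j : Fin 2, MinMSync t t (({i} : Multiset (Fin 2)), ({j} : Multiset (Fin 2)))) ∧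
    ((({0, 1} : Multiset (Fin 2)), ({0, 1} : Multiset (Fin 2))) =
      (({0} : Multiset (Fin 2)), ({0} : Multiset (Fin 2))) +
      (({1} : Multiset (Fin 2)), ({1} : Multiset (Fin 2)))) ∧
    ((({0, 1} : Multiset (Fin 2)), ({0, 1} : Multiset (Fin 2))) =
      (({0} : Multiset (Fin 2)), ({1} : Multiset (Fin 2))) +
      (({1} : Multiset (Fin 2)), ({0} : Multiset (Fin 2)))) ∧
    (({((({0} : Multiset (Fin 2)), ({0} : Multiset (Fin 2)))),
       ((({1} : Multiset (Fin 2)), ({1} : Multiset (Fin 2))))} :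
        Set (Multiset (Fin 2) × Multiset (Fin 2))) ≠
     {((({0} : Multiset (Fin 2)), ({1} : Multiset (Fin 2)))),
      ((({1} : Multiset (Fin 2)), ({0} : Multiset (Fin 2))))}) := by
  have htall : ∀ i : Fin 2, t i = {0} := by
    intro i; fin_cases i <;> assumption
  have hbind : ∀ U : Multiset (Fin 2), U.bind t = Multiset.replicate (Multiset.card U) 0 := by
    intro U
    induction U using Multiset.induction with
    | empty => simp
    | cons a s ih => simp [htall, ih, Multiset.replicate_succ]
  have hsync : ∀ p : Multiset (Fin 2) × Multiset (Fin 2),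
      MSync t t p ↔ Multiset.card p.1 = Multiset.card p.2 := by
    intro p
    constructor
    · intro h
      have := congrArg Multiset.card h
      simpa [hbind] using this
    · intro h
      simp only [MSync, hbind, h]
  refine ⟨?_, ?_, ?_, ?_, ?_⟩
  · rw [hsync]
  · intro i j
    refine ⟨(hsync _).mpr (by simp), by simp [Prod.ext_iff], ?_⟩
    intro q hq hle
    rw [hsync] at hq
    have h1 := Multiset.le_singleton.mp hle.1
    have h2 := Multiset.le_singleton.mp hle.2
    rcases h1 with h1 | h1 <;> rcases h2 with h2 | h2
    · left; exact Prod.ext h1 h2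
    · exfalso; rw [h1, h2] at hq; simp at hq
    · exfalso; rw [h1, h2] at hq; simp at hq
    · right; exact Prod.ext h1 h2
  · rfl
  · refine Prod.ext rfl ?_
    show ({0, 1} : Multiset (Fin 2)) = {1} + {0}
    decide
  · intro h
    have hmem : (({0} : Multiset (Fin 2)), ({0} : Multiset (Fin 2))) ∈
        ({((({0} : Multiset (Fin 2)), ({1} : Multiset (Fin 2)))),
      ((({1} : Multiset (Fin 2)), ({0} : Multiset (Fin 2))))} : Set _) := by
      rw [← h]; left; rfl
    rcases hmem with h' | h' <;> simp [Prod.ext_iff] at h'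
end
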